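/- Let Z^n be a product of n independent random variables on a finite set Z, and let D ⊆ Z^n with P(D) > 0. Then for every integer l > sqrt((n/2)·log(1/P(D))), the Hamming l-neighbourhood Γ^l(D) := {z̃ ∈ Z^n : ∃ z ∈ D, d_H(z,z̃) ≤ l} satisfies P(Γ^l(D)) ≥ 1 − exp(−(2/n)·(l − sqrt((n/2)·log(1/P(D))))²). -/

import Mathlib

/-!
Let `F g` be the Hamming distance from `g` to `D`. It is `1`-Lipschitz for the Hamming
distance, so conditioning on one coordinate at a time and applying Hoeffding's lemma to each
conditional average (McDiarmid's bounded-differences argument) bounds its exponential moments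
under the product measure by `exp (t 𝔼F + n t² / 8)`, hence both of its tails at distance `r`
from the mean by `exp (-2 r² / n)`. As `F` vanishes on `D`, the lower tail at `r = 𝔼F` gives
`P(D) ≤ exp (-2 (𝔼F)² / n)`, i.e. `𝔼F ≤ √((n/2) log (1/P(D)))`; the upper tail at
`r = l - 𝔼F` then bounds the mass outside `Γˡ(D)`.
-/

open Real MeasureTheory ProbabilityTheory

lemma sum_mul_exp_sub_mean_le {α : Type*} [Fintype α] (q : α → ℝ) (hq0 : ∀ x, 0 ≤ q x)
    (hq1 : ∑ x, q x = 1) (X : α → ℝ) {c : ℝ} (hX : ∀ x y, X x - X y ≤ c) (t : ℝ) :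
    ∑ x, q x * exp (t * (X x - ∑ y, q y * X y)) ≤ exp (c ^ 2 * t ^ 2 / 8) := by
  let _ : MeasurableSpace α := ⊤
  have : Nonempty α := by
    by_contra h
    simp [not_nonempty_iff.mp h] at hq1
  obtain ⟨x₀, -, hx₀⟩ := Finset.univ.exists_min_image X Finset.univ_nonempty
  let P : PMF α := PMF.ofFintype (fun x => ENNReal.ofReal (q x)) <| by
    rw [← ENNReal.ofReal_sum_of_nonneg fun x _ => hq0 x, hq1, ENNReal.ofReal_one]
  have hP : ∀ x, (P x).toReal = q x := fun x => ENNReal.toReal_ofReal (hq0 x)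
  have hoeffding := (hasSubgaussianMGF_of_mem_Icc (μ := P.toMeasure) (X := X)
    (a := X x₀) (b := X x₀ + c) .of_discrete
    (ae_of_all _ fun x => ⟨hx₀ x (Finset.mem_univ x), by linarith [hX x x₀]⟩)).mgf_le t
  simp only [mgf, PMF.integral_eq_sum, hP, smul_eq_mul,
    add_sub_cancel_left] at hoeffding
  convert hoeffding using 2
  simp only [NNReal.coe_pow, NNReal.coe_div, coe_nnnorm, norm_eq_abs, NNReal.coe_ofNat,
    div_pow, sq_abs]
  ring

lemma sum_filter_le_exp_mul_sum_mul_exp {α : Type*} [Fintype α] (w F : α → ℝ)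
    (hw : ∀ x, 0 ≤ w x) (c : ℝ) {t : ℝ} (ht : 0 ≤ t) :
    ∑ x ∈ Finset.univ.filter (fun x => c ≤ F x), w x ≤
      exp (-(t * c)) * ∑ x, w x * exp (t * F x) := by
  rw [Finset.mul_sum]
  calc ∑ x ∈ Finset.univ.filter (fun x => c ≤ F x), w x
      ≤ ∑ x ∈ Finset.univ.filter (fun x => c ≤ F x),
          exp (-(t * c)) * (w x * exp (t * F x)) := by
        refine Finset.sum_le_sum fun x hx => ?_
        have hcx : c ≤ F x := (Finset.mem_filter.mp hx).2
        rw [mul_left_comm, ← exp_add]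
        exact le_mul_of_one_le_right (hw x) (one_le_exp (by nlinarith))
    _ ≤ ∑ x, exp (-(t * c)) * (w x * exp (t * F x)) :=
        Finset.sum_le_sum_of_subset_of_nonneg (Finset.filter_subset _ _)
          fun x _ _ => by have := hw x; positivity

section McDiarmid

variable {Z : Type*} {n : ℕ}

lemma Fintype.sum_fin_succ_pi [Fintype Z] {M : Type*} [AddCommMonoid M]
    (h : (Fin (n + 1) → Z) → M) :
    ∑ g, h g = ∑ z, ∑ w : Fin n → Z, h (Fin.cons z w) := by
  rw [← (Fin.consEquiv fun _ => Z).sum_comp, Fintype.sum_prod_type]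
  rfl

lemma sum_prod_mul_eq_sum_prod_mul_sum_cons [Fintype Z] (p : Fin (n + 1) → Z → ℝ)
    (H : (Fin (n + 1) → Z) → ℝ) :
    ∑ g, (∏ i, p i (g i)) * H g =
      ∑ w : Fin n → Z, (∏ i, p i.succ (w i)) * ∑ z, p 0 z * H (Fin.cons z w) := by
  rw [Fintype.sum_fin_succ_pi, Finset.sum_comm]
  simp only [Fin.prod_univ_succ, Fin.cons_zero, Fin.cons_succ, Finset.mul_sum]
  exact Finset.sum_congr rfl fun w _ => Finset.sum_congr rfl fun z _ => by ring

lemma hammingDist_cons [DecidableEq Z] (a b : Z) (w w' : Fin n → Z) :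
    hammingDist (Fin.cons a w : Fin (n + 1) → Z) (Fin.cons b w') =
      (if a = b then 0 else 1) + hammingDist w w' := by
  simp [hammingDist, Finset.card_filter, Fin.sum_univ_succ]

variable [Fintype Z] [DecidableEq Z]

theorem mcdiarmid_mgf_le (p : Fin n → Z → ℝ) (hp0 : ∀ i z, 0 ≤ p i z)
    (hp1 : ∀ i, ∑ z, p i z = 1) (F : (Fin n → Z) → ℝ)
    (hF : ∀ g g', F g - F g' ≤ hammingDist g g') (t : ℝ) :
    ∑ g, (∏ i, p i (g i)) * exp (t * F g) ≤
      exp (t * ∑ g, (∏ i, p i (g i)) * F g + n * t ^ 2 / 8) := by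
  induction n with
  | zero => simp
  | succ n ih =>
    -- the conditional expectation of `F` given the last `n` coordinates
    set G : (Fin n → Z) → ℝ := fun w => ∑ z, p 0 z * F (Fin.cons z w)
    have hG : ∀ w w', G w - G w' ≤ hammingDist w w' := fun w w' => by
      calc G w - G w' = ∑ z, p 0 z * (F (Fin.cons z w) - F (Fin.cons z w')) := by
            simp only [G, mul_sub, Finset.sum_sub_distrib]
        _ ≤ ∑ z, p 0 z * (hammingDist w w' : ℝ) := by
            gcongr with z
            · exact hp0 0 z
            · simpa [hammingDist_cons] using hF (Fin.cons z w) (Fin.cons z w')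
        _ = hammingDist w w' := by rw [← Finset.sum_mul, hp1, one_mul]
    have hcond : ∀ w, ∑ z, p 0 z * exp (t * F (Fin.cons z w)) ≤
        exp (t ^ 2 / 8) * exp (t * G w) := fun w => by
      have hX : ∀ a b, F (Fin.cons a w) - F (Fin.cons b w) ≤ 1 := fun a b => by
        have := hF (Fin.cons a w) (Fin.cons b w)
        rw [hammingDist_cons, hammingDist_self] at this
        split_ifs at this <;> push_cast at this <;> linarith
      have := sum_mul_exp_sub_mean_le (p 0) (hp0 0) (hp1 0) _ hX t
      rw [one_pow, one_mul] at this
      calc ∑ z, p 0 z * exp (t * F (Fin.cons z w))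
          = (∑ z, p 0 z * exp (t * (F (Fin.cons z w) - G w))) * exp (t * G w) := by
            simp only [Finset.sum_mul, mul_assoc, ← exp_add]
            ring_nf
        _ ≤ exp (t ^ 2 / 8) * exp (t * G w) := by gcongr
    calc ∑ g, (∏ i, p i (g i)) * exp (t * F g)
        = ∑ w : Fin n → Z, (∏ i, p i.succ (w i)) *
            ∑ z, p 0 z * exp (t * F (Fin.cons z w)) :=
          sum_prod_mul_eq_sum_prod_mul_sum_cons p _
      _ ≤ ∑ w : Fin n → Z, (∏ i, p i.succ (w i)) * (exp (t ^ 2 / 8) * exp (t * G w)) := by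
          gcongr with w
          · exact Finset.prod_nonneg fun i _ => hp0 _ _
          · exact hcond w
      _ = exp (t ^ 2 / 8) * ∑ w : Fin n → Z, (∏ i, p i.succ (w i)) * exp (t * G w) := by
          rw [Finset.mul_sum]
          exact Finset.sum_congr rfl fun w _ => by ring
      _ ≤ exp (t ^ 2 / 8) * exp (t * ∑ w : Fin n → Z, (∏ i, p i.succ (w i)) * G w +
            n * t ^ 2 / 8) := by
          gcongr
          exact ih _ (fun i => hp0 _) (fun i => hp1 _) G hG
      _ = exp (t * ∑ g, (∏ i, p i (g i)) * F g + (n + 1 : ℕ) * t ^ 2 / 8) := by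
          rw [sum_prod_mul_eq_sum_prod_mul_sum_cons p F, ← exp_add]
          push_cast
          simp only [G]
          ring_nf

theorem mcdiarmid_upper_tail_le (hn : 0 < n) (p : Fin n → Z → ℝ) (hp0 : ∀ i z, 0 ≤ p i z)
    (hp1 : ∀ i, ∑ z, p i z = 1) (F : (Fin n → Z) → ℝ)
    (hF : ∀ g g', F g - F g' ≤ hammingDist g g') {r : ℝ} (hr : 0 ≤ r) :
    ∑ g ∈ Finset.univ.filter (fun g => ∑ g', (∏ i, p i (g' i)) * F g' + r ≤ F g),
      ∏ i, p i (g i) ≤ exp (-2 * r ^ 2 / n) := by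
  set m := ∑ g', (∏ i, p i (g' i)) * F g'
  have hn' : (0 : ℝ) < n := by exact_mod_cast hn
  -- the minimiser of `n t² / 8 - t r`
  set t := 4 * r / n with ht
  calc _ ≤ exp (-(t * (m + r))) * ∑ g, (∏ i, p i (g i)) * exp (t * F g) :=
        sum_filter_le_exp_mul_sum_mul_exp _ F (fun g => Finset.prod_nonneg fun i _ => hp0 _ _)
          _ (by positivity)
    _ ≤ exp (-(t * (m + r))) * exp (t * m + n * t ^ 2 / 8) := by
        gcongr
        exact mcdiarmid_mgf_le p hp0 hp1 F hF t
    _ = exp (-2 * r ^ 2 / n) := by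
        rw [← exp_add, ht]
        congr 1
        field_simp
        ring

theorem mcdiarmid_lower_tail_le (hn : 0 < n) (p : Fin n → Z → ℝ) (hp0 : ∀ i z, 0 ≤ p i z)
    (hp1 : ∀ i, ∑ z, p i z = 1) (F : (Fin n → Z) → ℝ)
    (hF : ∀ g g', F g - F g' ≤ hammingDist g g') {r : ℝ} (hr : 0 ≤ r) :
    ∑ g ∈ Finset.univ.filter (fun g => F g ≤ ∑ g', (∏ i, p i (g' i)) * F g' - r),
      ∏ i, p i (g i) ≤ exp (-2 * r ^ 2 / n) := by
  have hF' : ∀ g g', -F g - -F g' ≤ hammingDist g g' := fun g g' => by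
    have := hF g' g
    rw [hammingDist_comm] at this
    linarith
  convert mcdiarmid_upper_tail_le hn p hp0 hp1 (fun g => -F g) hF' hr using 3 with g
  simp only [mul_neg, Finset.sum_neg_distrib]
  constructor <;> intro h <;> linarith

end McDiarmid

section HammingDistToFinset

variable {ι : Type*} [Fintype ι] {β : ι → Type*} [∀ i, DecidableEq (β i)]
  (D : Finset (∀ i, β i)) (hD : D.Nonempty)

def hammingDistToFinset (g : ∀ i, β i) : ℕ := D.inf' hD (hammingDist · g)

variable {D hD}

lemma hammingDistToFinset_eq_zero {g : ∀ i, β i} (hg : g ∈ D) :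
    hammingDistToFinset D hD g = 0 :=
  Nat.le_zero.mp <| (D.inf'_le _ hg).trans_eq (hammingDist_self g)

lemma hammingDistToFinset_sub_le (g g' : ∀ i, β i) :
    (hammingDistToFinset D hD g : ℝ) - hammingDistToFinset D hD g' ≤ hammingDist g g' := by
  obtain ⟨f, hf, hfg'⟩ := D.exists_mem_eq_inf' hD (hammingDist · g')
  have : hammingDistToFinset D hD g ≤ hammingDistToFinset D hD g' + hammingDist g g' :=
    calc hammingDistToFinset D hD g ≤ hammingDist f g := D.inf'_le _ hf
      _ ≤ hammingDist f g' + hammingDist g' g := hammingDist_triangle f g' g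
      _ = _ := by rw [hammingDistToFinset, hfg', hammingDist_comm g']
  rw [sub_le_iff_le_add']
  exact_mod_cast this

lemma lt_hammingDistToFinset_iff {l : ℕ} {g : ∀ i, β i} :
    l < hammingDistToFinset D hD g ↔ ∀ f ∈ D, l < hammingDist f g :=
  Finset.lt_inf'_iff hD

end HammingDistToFinset

lemma le_sqrt_mul_log_inv_of_le_exp {P m c : ℝ} (hP : 0 < P) (hc : 0 < c)
    (h : P ≤ exp (-2 * m ^ 2 / c)) : m ≤ sqrt (c / 2 * log (1 / P)) := by
  have hlog : log P ≤ -2 * m ^ 2 / c := (log_le_log hP h).trans_eq (log_exp _)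
  rw [le_div_iff₀ hc] at hlog
  refine le_sqrt_of_sq_le ?_
  rw [one_div, log_inv]
  nlinarith

section BlowingUp

variable {Z : Type*} [Fintype Z] [DecidableEq Z] {n : ℕ}

theorem mean_hammingDistToFinset_le (hn : 0 < n) (p : Fin n → Z → ℝ)
    (hp0 : ∀ i z, 0 ≤ p i z) (hp1 : ∀ i, ∑ z, p i z = 1) {D : Finset (Fin n → Z)}
    (hD : D.Nonempty) (hpos : 0 < ∑ f ∈ D, ∏ i, p i (f i)) :
    ∑ g, (∏ i, p i (g i)) * (hammingDistToFinset D hD g : ℝ) ≤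
      sqrt (n / 2 * log (1 / ∑ f ∈ D, ∏ i, p i (f i))) := by
  have hm0 : 0 ≤ ∑ g, (∏ i, p i (g i)) * (hammingDistToFinset D hD g : ℝ) :=
    Finset.sum_nonneg fun g _ =>
      mul_nonneg (Finset.prod_nonneg fun i _ => hp0 _ _) (Nat.cast_nonneg _)
  refine le_sqrt_mul_log_inv_of_le_exp hpos (by exact_mod_cast hn) <| le_trans ?_
    (mcdiarmid_lower_tail_le hn p hp0 hp1 (hammingDistToFinset D hD ·)
      hammingDistToFinset_sub_le hm0)
  refine Finset.sum_le_sum_of_subset_of_nonneg (fun g hg => ?_)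
    fun g _ _ => Finset.prod_nonneg fun i _ => hp0 _ _
  rw [Finset.mem_filter, sub_self, hammingDistToFinset_eq_zero hg]
  exact ⟨Finset.mem_univ g, Nat.cast_zero.le⟩

theorem sum_filter_forall_lt_hammingDist_le (hn : 0 < n) (p : Fin n → Z → ℝ)
    (hp0 : ∀ i z, 0 ≤ p i z) (hp1 : ∀ i, ∑ z, p i z = 1) {D : Finset (Fin n → Z)}
    (hD : D.Nonempty) {l : ℕ}
    (hl : ∑ g, (∏ i, p i (g i)) * (hammingDistToFinset D hD g : ℝ) ≤ l) :
    ∑ g ∈ Finset.univ.filter (fun g => ∀ f ∈ D, l < hammingDist f g), ∏ i, p i (g i) ≤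
      exp (-2 * (l - ∑ g, (∏ i, p i (g i)) * (hammingDistToFinset D hD g : ℝ)) ^ 2 / n) := by
  refine le_trans ?_ (mcdiarmid_upper_tail_le hn p hp0 hp1 (hammingDistToFinset D hD ·)
    hammingDistToFinset_sub_le (sub_nonneg.mpr hl))
  refine Finset.sum_le_sum_of_subset_of_nonneg (fun g hg => ?_)
    fun g _ _ => Finset.prod_nonneg fun i _ => hp0 _ _
  rw [Finset.mem_filter, ← lt_hammingDistToFinset_iff (hD := hD)] at hg
  rw [Finset.mem_filter, add_sub_cancel]
  exact ⟨Finset.mem_univ g, Nat.cast_le.mpr hg.2.le⟩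

end BlowingUp

open Classical in
/-- Marton's non-asymptotic blowing-up lemma: for `n` independent random variables on a
finite set `Z` and a set `D` with `P(D) > 0`, for every integer
`l > sqrt((n/2)·log(1/P(D)))`, the Hamming `l`-neighbourhood of `D` satisfies
`P(Γˡ(D)) ≥ 1 − exp(−(2/n)(l − sqrt((n/2)·log(1/P(D))))²)`. -/
theorem blowing_up_lemma {Z : Type*} [Fintype Z] (n : ℕ) (hn : 0 < n)
    (p : Fin n → Z → ℝ) (hp0 : ∀ i z, 0 ≤ p i z) (hp1 : ∀ i, ∑ z, p i z = 1)
    (D : Finset (Fin n → Z)) (hpos : 0 < ∑ f ∈ D, ∏ i, p i (f i))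
    (l : ℕ)
    (hl : Real.sqrt (((n : ℝ) / 2) * Real.log (1 / ∑ f ∈ D, ∏ i, p i (f i))) < l) :
    1 - Real.exp (-(2 / (n : ℝ)) *
        ((l : ℝ) - Real.sqrt (((n : ℝ) / 2) *
          Real.log (1 / ∑ f ∈ D, ∏ i, p i (f i)))) ^ 2) ≤
      ∑ g ∈ Finset.univ.filter (fun g => ∃ f ∈ D, hammingDist f g ≤ l),
        ∏ i, p i (g i) := by
  have hD : D.Nonempty := Finset.nonempty_of_sum_ne_zero hpos.ne'
  set a := sqrt ((n : ℝ) / 2 * log (1 / ∑ f ∈ D, ∏ i, p i (f i)))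
  set m := ∑ g, (∏ i, p i (g i)) * (hammingDistToFinset D hD g : ℝ)
  have hma : m ≤ a := mean_hammingDistToFinset_le hn p hp0 hp1 hD hpos
  have hfar := sum_filter_forall_lt_hammingDist_le hn p hp0 hp1 hD (hma.trans hl.le)
  have hexp : exp (-2 * (l - m) ^ 2 / n) ≤ exp (-(2 / (n : ℝ)) * (l - a) ^ 2) := by
    have : (l - a) ^ 2 ≤ (l - m) ^ 2 := pow_le_pow_left₀ (by linarith) (by linarith) 2
    rw [exp_le_exp, neg_mul, neg_mul, neg_div, neg_le_neg_iff, mul_div_right_comm]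
    gcongr
  have htotal : ∑ g : Fin n → Z, ∏ i, p i (g i) = 1 := by
    simp [← Fintype.prod_sum, hp1]
  rw [← Finset.sum_filter_add_sum_filter_not _ (fun g => ∃ f ∈ D, hammingDist f g ≤ l)]
    at htotal
  simp only [not_exists, not_and, not_le] at htotal
  linarith
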